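/- Let X ⊆ ℝⁿ be compact, f : X × U × N → X Borel measurable, π : X → U Borel measurable, d a probability distribution on N, and X_s ⊆ X Borel measurable, nonempty, and closed under the system dynamics (for every x ∈ X_s and every ω ∈ N, f(x, π(x), ω) ∈ X_s). Suppose V : X → ℝ is nonnegative, continuous, and there exists ε > 0 such that for every x ∈ X \ X_s, E_{ω∼d}[V(f(x, π(x), ω))] ≤ V(x) − ε. Then for every initial state x₀ ∈ X, for d^ℕ-almost every noise sequence ω ∈ N^ℕ, the trajectory x_{t+1} = f(x_t, π(x_t), ω_t) reaches X_s in finite time: there exists t with x_t ∈ X_s. -/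

import Mathlib

open MeasureTheory Filter

/-- ℝⁿ equipped with the ℓ¹ norm. -/
abbrev L1 (n : ℕ) := PiLp 1 fun _ : Fin n => ℝ

instance (n : ℕ) : MeasurableSpace (L1 n) := MeasurableSpace.comap WithLp.ofLp MeasurableSpace.pi
instance (n : ℕ) : BorelSpace (L1 n) := PiLp.borelSpace 1

/-- Trajectory of the closed-loop system `x_{t+1} = f(x_t, π(x_t), ω_t)`. -/
def traj {X U N : Type*} (f : X → U → N → X) (π : X → U)
    (x₀ : X) (ω : ℕ → N) : ℕ → X
  | 0 => x₀
  | t + 1 => f (traj f π x₀ ω t) (π (traj f π x₀ ω t)) (ω t)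

open scoped ENNReal Topology

/-!
Let `K h x = 1_{x ∉ S} ∫ h (g x a) da` be the transition operator of the closed-loop chain
`g x a = f x (π x) a`, killed on entering `S`. Decomposing `d^ℕ = d ⊗ d^ℕ` along the first noise
value shows that `K^[t+1] 1 x₀` is the probability of not having reached `S` by time `t`. The
ranking condition reads `K V + ε K 1 ≤ V`; since `K` is monotone and linear, applying `K^[t]`
gives `K^[t+1] V + ε K^[t+1] 1 ≤ K^[t] V`, which telescopes to `ε ∑ₜ K^[t+1] 1 x₀ ≤ V x₀ < ∞`.
Hence the survival probabilities tend to zero. Working in `ℝ≥0∞` makes `K` additive without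
integrability side conditions; compactness of `X` bounds `V`, which is what lets the Bochner
integral of the hypothesis be read as a lower Lebesgue integral.
-/

namespace Finset

lemma prod_eq_ite_mul_prod_preimage_succ {M : Type*} [CommMonoid M] (s : Finset ℕ)
    (F : ℕ → M) :
    ∏ i ∈ s, F i = (if 0 ∈ s then F 0 else 1) *
      ∏ i ∈ s.preimage Nat.succ Nat.succ_injective.injOn, F (i + 1) := by
  classical
  rw [prod_preimage' Nat.succ, ← prod_filter_not_mul_prod_filter s (· ∈ Set.range Nat.succ),
    Nat.range_succ, prod_filter]
  simp [Nat.pos_iff_ne_zero, prod_ite_eq']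

end Finset

section SeqCons

variable {N : Type*}

def seqCons (a : N) (ω : ℕ → N) : ℕ → N
  | 0 => a
  | i + 1 => ω i

lemma seqCons_mem_pi {a : N} {ω : ℕ → N} {s : Finset ℕ} {t : ℕ → Set N} :
    seqCons a ω ∈ Set.pi ↑s t ↔
      (0 ∈ s → a ∈ t 0) ∧
        ω ∈ Set.pi ↑(s.preimage Nat.succ Nat.succ_injective.injOn) fun i => t (i + 1) := by
  simp only [Set.mem_pi, Finset.mem_coe, Finset.mem_preimage]
  refine ⟨fun h => ⟨h 0, fun i => h (i + 1)⟩, ?_⟩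
  rintro ⟨h0, hs⟩ (_ | i)
  exacts [h0, hs i]

variable [MeasurableSpace N]

lemma measurable_seqCons : Measurable fun q : N × (ℕ → N) => seqCons q.1 q.2 :=
  measurable_pi_lambda _ fun i => by cases i <;> simp only [seqCons] <;> fun_prop

theorem map_seqCons_infinitePi (d : Measure N) [IsProbabilityMeasure d] :
    (d.prod (Measure.infinitePi fun _ => d)).map (fun q => seqCons q.1 q.2) =
      Measure.infinitePi fun _ => d := by
  classical
  refine Measure.eq_infinitePi _ fun s t ht => ?_
  have hpre : (fun q : N × (ℕ → N) => seqCons q.1 q.2) ⁻¹' Set.pi ↑s t =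
      {a | 0 ∈ s → a ∈ t 0} ×ˢ Set.pi ↑(s.preimage Nat.succ Nat.succ_injective.injOn)
        fun i => t (i + 1) := by
    ext ⟨a, ω⟩
    exact seqCons_mem_pi
  rw [Measure.map_apply measurable_seqCons (.pi s.countable_toSet fun i _ => ht i), hpre,
    Measure.prod_prod, Measure.infinitePi_pi _ fun i _ => ht (i + 1),
    Finset.prod_eq_ite_mul_prod_preimage_succ s]
  split_ifs with h0 <;> simp [h0]

end SeqCons

lemma ENNReal.tendsto_atTop_zero_of_add_mul_le {a b : ℕ → ℝ≥0∞} {c : ℝ≥0∞} (hc : c ≠ 0)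
    (ha : a 0 ≠ ∞) (h : ∀ t, a (t + 1) + c * b t ≤ a t) : Tendsto b atTop (𝓝 0) := by
  have hpartial : ∀ T, ∑ t ∈ Finset.range T, c * b t + a T ≤ a 0 := by
    intro T
    induction T with
    | zero => simp
    | succ T ih =>
      calc ∑ t ∈ Finset.range (T + 1), c * b t + a (T + 1)
          = ∑ t ∈ Finset.range T, c * b t + (a (T + 1) + c * b T) := by
            rw [Finset.sum_range_succ]; ring
        _ ≤ a 0 := (add_le_add le_rfl (h T)).trans ih
  have hsum : c * ∑' t, b t ≠ ∞ := by
    rw [← ENNReal.tsum_mul_left]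
    exact ne_top_of_le_ne_top ha
      (ENNReal.tsum_le_of_sum_range_le fun T => le_trans le_self_add (hpartial T))
  exact ENNReal.tendsto_atTop_zero_of_tsum_ne_top fun h => hsum (by simp [h, hc])

section Killed

variable {X N : Type*} [MeasurableSpace N]
  {g : X → N → X} {d : Measure N} {S : Set X}

variable (g d S) in
noncomputable def killedStep (h : X → ℝ≥0∞) : X → ℝ≥0∞ :=
  Sᶜ.indicator fun x => ∫⁻ a, h (g x a) ∂d

lemma killedStep_mono : Monotone (killedStep g d S) :=
  fun _ _ hh _ => Set.indicator_le_indicator (lintegral_mono fun _ => hh _)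

lemma killedStep_ofReal_add_le [IsProbabilityMeasure d] {V : X → ℝ} (hV : ∀ x, 0 ≤ V x)
    (hVint : ∀ x, Integrable (fun a => V (g x a)) d) {ε : ℝ} (hε : 0 ≤ ε)
    (hdec : ∀ x ∉ S, ∫ a, V (g x a) ∂d ≤ V x - ε) (x : X) :
    killedStep g d S (fun y => ENNReal.ofReal (V y)) x +
        ENNReal.ofReal ε * killedStep g d S 1 x ≤ ENNReal.ofReal (V x) := by
  by_cases hx : x ∈ S
  · simp [killedStep, hx]
  simp only [killedStep, Set.indicator_of_mem (Set.mem_compl hx), Pi.one_apply, lintegral_one,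
    measure_univ, mul_one]
  rw [← ofReal_integral_eq_lintegral_ofReal (hVint x) (ae_of_all _ fun a => hV _),
    ← ENNReal.ofReal_add (integral_nonneg fun a => hV _) hε]
  exact ENNReal.ofReal_le_ofReal (by linarith [hdec x hx])

variable [MeasurableSpace X]

lemma measurable_killedStep [SFinite d] (hg : Measurable fun q : X × N => g q.1 q.2)
    (hS : MeasurableSet S) {h : X → ℝ≥0∞} (hh : Measurable h) :
    Measurable (killedStep g d S h) :=
  ((hh.comp hg).lintegral_prod_right').indicator hS.compl

lemma measurable_killedStep_iterate [SFinite d] (hg : Measurable fun q : X × N => g q.1 q.2)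
    (hS : MeasurableSet S) {h : X → ℝ≥0∞} (hh : Measurable h) (t : ℕ) :
    Measurable ((killedStep g d S)^[t] h) := by
  induction t with
  | zero => exact hh
  | succ t ih => rw [Function.iterate_succ_apply']; exact measurable_killedStep hg hS ih

lemma killedStep_add_const_mul (hg : Measurable fun q : X × N => g q.1 q.2) {h k : X → ℝ≥0∞}
    (hh : Measurable h) (hk : Measurable k) (c : ℝ≥0∞) :
    killedStep g d S (fun x => h x + c * k x) =
      fun x => killedStep g d S h x + c * killedStep g d S k x := by
  ext x
  by_cases hx : x ∈ S
  · simp [killedStep, hx]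
  · have hgx : Measurable (g x) := hg.comp measurable_prodMk_left
    have hhx : Measurable fun a => h (g x a) := hh.comp hgx
    have hkx : Measurable fun a => k (g x a) := hk.comp hgx
    simp only [killedStep, Set.indicator_of_mem (Set.mem_compl hx)]
    rw [lintegral_add_left hhx, lintegral_const_mul _ hkx]

lemma killedStep_iterate_add_le [SFinite d] (hg : Measurable fun q : X × N => g q.1 q.2)
    (hS : MeasurableSet S) {W : X → ℝ≥0∞} (hW : Measurable W) {c : ℝ≥0∞}
    (hdrift : ∀ x, killedStep g d S W x + c * killedStep g d S 1 x ≤ W x) (t : ℕ) (x : X) :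
    (killedStep g d S)^[t + 1] W x + c * (killedStep g d S)^[t + 1] 1 x ≤
      (killedStep g d S)^[t] W x := by
  set K := killedStep g d S
  induction t generalizing x with
  | zero => exact hdrift x
  | succ t ih =>
    have hlin := killedStep_add_const_mul (d := d) (S := S) hg
      (measurable_killedStep_iterate (d := d) hg hS hW (t + 1))
      (measurable_killedStep_iterate (d := d) hg hS measurable_one (t + 1)) c
    calc K^[t + 2] W x + c * K^[t + 2] 1 x
        = K (fun y => K^[t + 1] W y + c * K^[t + 1] 1 y) x := by
          simp only [Function.iterate_succ_apply' _ (t + 1), hlin, K]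
      _ ≤ K (K^[t] W) x := killedStep_mono ih x
      _ = K^[t + 1] W x := (congrFun (Function.iterate_succ_apply' K t W) x).symm

end Killed

section Trajectory

variable {X U N : Type*}

lemma traj_seqCons_succ (f : X → U → N → X) (π : X → U) (x : X) (a : N) (ω : ℕ → N) (t : ℕ) :
    traj f π x (seqCons a ω) (t + 1) = traj f π (f x (π x) a) ω t := by
  induction t with
  | zero => rfl
  | succ t ih => rw [traj, ih]; rfl

variable [MeasurableSpace X] [MeasurableSpace N] {f : X → U → N → X} {π : X → U} {S : Set X}

lemma measurable_traj (hg : Measurable fun q : X × N => f q.1 (π q.1) q.2) (t : ℕ) :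
    Measurable fun q : X × (ℕ → N) => traj f π q.1 q.2 t := by
  induction t with
  | zero => exact measurable_fst
  | succ t ih => exact hg.comp (ih.prodMk ((measurable_pi_apply t).comp measurable_snd))

lemma measurableSet_survival (hg : Measurable fun q : X × N => f q.1 (π q.1) q.2)
    (hS : MeasurableSet S) (t : ℕ) :
    MeasurableSet {q : X × (ℕ → N) | ∀ s ≤ t, traj f π q.1 q.2 s ∉ S} := by
  simp only [Set.ofPred_forall]
  exact .iInter fun s => .iInter fun _ => (measurable_traj hg s) hS.compl

theorem infinitePi_survival_eq (hg : Measurable fun q : X × N => f q.1 (π q.1) q.2)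
    (hS : MeasurableSet S) (d : Measure N) [IsProbabilityMeasure d] (t : ℕ) (x : X) :
    Measure.infinitePi (fun _ => d) {ω | ∀ s ≤ t, traj f π x ω s ∉ S} =
      (killedStep (fun x a => f x (π x) a) d S)^[t + 1] 1 x := by
  induction t generalizing x with
  | zero => by_cases hx : x ∈ S <;> simp [killedStep, traj, hx]
  | succ t ih =>
    rw [Function.iterate_succ_apply']
    by_cases hx : x ∈ S
    · have hempty : {ω : ℕ → N | ∀ s ≤ t + 1, traj f π x ω s ∉ S} = ∅ :=
        Set.eq_empty_of_forall_notMem fun ω hω => hω 0 (Nat.zero_le _) hx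
      simp [hempty, killedStep, hx]
    have hpre : (fun q : N × (ℕ → N) => seqCons q.1 q.2) ⁻¹'
          {ω | ∀ s ≤ t + 1, traj f π x ω s ∉ S} =
        (fun q : N × (ℕ → N) => (f x (π x) q.1, q.2)) ⁻¹'
          {q | ∀ s ≤ t, traj f π q.1 q.2 s ∉ S} := by
      ext ⟨a, ω⟩
      simp only [Set.mem_preimage, Set.mem_ofPred_eq]
      refine ⟨fun h s hs => traj_seqCons_succ f π x a ω s ▸ h (s + 1) (by omega), ?_⟩
      rintro h (_ | s) hs
      exacts [hx, traj_seqCons_succ f π x a ω s ▸ h s (by omega)]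
    have hsurv : MeasurableSet {ω : ℕ → N | ∀ s ≤ t + 1, traj f π x ω s ∉ S} :=
      measurable_prodMk_left (measurableSet_survival hg hS (t + 1))
    have hstep : MeasurableSet ((fun q : N × (ℕ → N) => (f x (π x) q.1, q.2)) ⁻¹'
        {q | ∀ s ≤ t, traj f π q.1 q.2 s ∉ S}) :=
      ((hg.comp (measurable_const.prodMk measurable_fst)).prodMk measurable_snd)
        (measurableSet_survival hg hS t)
    rw [← map_seqCons_infinitePi d, Measure.map_apply measurable_seqCons hsurv, hpre,
      Measure.prod_apply hstep]
    simp only [killedStep, Set.indicator_of_mem (Set.mem_compl hx), ← ih]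
    rfl

end Trajectory

theorem rsm_implies_as_reachability_general
    {n m p : ℕ} (X : Set (L1 n)) (U : Set (L1 m)) (N : Set (L1 p))
    (hX : IsCompact X)
    (f : X → U → N → X) (π : X → U)
    -- `f` and `π` are Borel measurable:
    (hfmeas : Measurable fun q : X × U × N => f q.1 q.2.1 q.2.2)
    (hπmeas : Measurable π)
    -- `d` is a probability distribution on `N`:
    (d : Measure N) [IsProbabilityMeasure d]
    -- `μ` is the infinite product measure `d^ℕ` on `N^ℕ`, characterized on cylinders:
    (μ : Measure (ℕ → N))
    (hμ : ∀ (s : Finset ℕ) (B : ℕ → Set N), (∀ i, MeasurableSet (B i)) →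
      μ {ω | ∀ i ∈ s, ω i ∈ B i} = ∏ i ∈ s, d (B i))
    -- `Xs ⊆ X` is Borel measurable, nonempty and closed under the dynamics:
    (Xs : Set (L1 n)) (hXsMeas : MeasurableSet Xs)
    -- `V` is a ranking supermartingale for `Xs`:
    (V : X → ℝ) (hVnonneg : ∀ x, 0 ≤ V x) (hVcont : Continuous V)
    (ε : ℝ) (hε : 0 < ε)
    (hdec : ∀ x : X, (x : L1 n) ∉ Xs → ∫ ω, V (f x (π x) ω) ∂d ≤ V x - ε)
    (x₀ : X) :
    ∀ᵐ ω ∂μ, ∃ t : ℕ, ((traj f π x₀ ω t : X) : L1 n) ∈ Xs := by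
  obtain rfl : μ = Measure.infinitePi fun _ => d := Measure.eq_infinitePi _ hμ
  have : CompactSpace X := isCompact_iff_compactSpace.mp hX
  set S : Set X := Subtype.val ⁻¹' Xs
  have hS : MeasurableSet S := measurable_subtype_coe hXsMeas
  have hg : Measurable fun q : X × N => f q.1 (π q.1) q.2 :=
    hfmeas.comp (measurable_fst.prodMk ((hπmeas.comp measurable_fst).prodMk measurable_snd))
  obtain ⟨C, hC⟩ := isCompact_univ.exists_bound_of_continuousOn hVcont.continuousOn
  have hVint (x : X) : Integrable (fun a => V (f x (π x) a)) d :=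
    .of_bound (hVcont.measurable.comp (hg.comp measurable_prodMk_left)).aestronglyMeasurable C
      (ae_of_all _ fun a => hC _ (Set.mem_univ _))
  have hsurvival : Tendsto (fun t => Measure.infinitePi (fun _ => d)
      {ω | ∀ s ≤ t, traj f π x₀ ω s ∉ S}) atTop (𝓝 0) := by
    simp only [infinitePi_survival_eq hg hS]
    exact ENNReal.tendsto_atTop_zero_of_add_mul_le (ENNReal.ofReal_pos.2 hε).ne'
      ENNReal.ofReal_ne_top fun t => killedStep_iterate_add_le hg hS
        (ENNReal.measurable_ofReal.comp hVcont.measurable)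
        (killedStep_ofReal_add_le hVnonneg hVint hε.le hdec) t x₀
  rw [ae_iff, ← nonpos_iff_eq_zero]
  exact ge_of_tendsto' hsurvival fun t => measure_mono fun ω hω s _ hs => hω ⟨s, hs⟩

/-- Under a ranking supermartingale for a nonempty set `Xs` that is closed
under the dynamics, from every initial state the trajectory reaches `Xs` in finite time,
for `d^ℕ`-almost every noise sequence. -/
theorem rsm_implies_as_reachability
    {n m p : ℕ} (X : Set (L1 n)) (U : Set (L1 m)) (N : Set (L1 p))
    (hX : IsCompact X)
    (f : X → U → N → X) (π : X → U)
    -- `f` and `π` are Borel measurable: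
    (hfmeas : Measurable fun q : X × U × N => f q.1 q.2.1 q.2.2)
    (hπmeas : Measurable π)
    -- `d` is a probability distribution on `N`:
    (d : Measure N) [IsProbabilityMeasure d]
    -- `μ` is the infinite product measure `d^ℕ` on `N^ℕ`, characterized on cylinders:
    (μ : Measure (ℕ → N)) [IsProbabilityMeasure μ]
    (hμ : ∀ (s : Finset ℕ) (B : ℕ → Set N), (∀ i, MeasurableSet (B i)) →
      μ {ω | ∀ i ∈ s, ω i ∈ B i} = ∏ i ∈ s, d (B i))
    -- `Xs ⊆ X` is Borel measurable, nonempty and closed under the dynamics: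
    (Xs : Set (L1 n)) (hXsX : Xs ⊆ X) (hXsMeas : MeasurableSet Xs) (hXsne : Xs.Nonempty)
    (hclosed : ∀ (x : X) (ω : N), (x : L1 n) ∈ Xs → (f x (π x) ω : L1 n) ∈ Xs)
    -- `V` is a ranking supermartingale for `Xs`:
    (V : X → ℝ) (hVnonneg : ∀ x, 0 ≤ V x) (hVcont : Continuous V)
    (ε : ℝ) (hε : 0 < ε)
    (hdec : ∀ x : X, (x : L1 n) ∉ Xs → ∫ ω, V (f x (π x) ω) ∂d ≤ V x - ε)
    (x₀ : X) :
    ∀ᵐ ω ∂μ, ∃ t : ℕ, ((traj f π x₀ ω t : X) : L1 n) ∈ Xs :=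
  rsm_implies_as_reachability_general X U N hX f π hfmeas hπmeas d μ hμ Xs hXsMeas V hVnonneg hVcont
    ε hε hdec x₀
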